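/- arXiv:math/0505100 — 4 statements merged into one kernel-verified Lean document; each statement's English description precedes it below -/
import Mathlib

section
/- For a finite multiset P of intervals in {1,…,n} and for each pair i ≤ j, let d_{ij}(P) be the number of intervals of P contained in [i, j]. If P' is obtained from P by a single nontrivial fusion of two overlapping intervals A and B, then d_{ij}(P') ≥ d_{ij}(P) for all i ≤ j, and strict inequality holds for at least one pair (i, j). -/
/-- `Q` is obtained from `P` by a single (nontrivial) fusion: two overlapping loops
`A, B` (with `A.1 < B.1 ≤ A.2 < B.2`, so neither contains the other and they meet)
are replaced by their union `(A.1, B.2)` and intersection `(B.1, A.2)`. -/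
def IsFusion (P Q : Multiset (ℕ × ℕ)) : Prop :=
  ∃ A B : ℕ × ℕ, A.1 < B.1 ∧ B.1 ≤ A.2 ∧ A.2 < B.2 ∧
    A ∈ P ∧ B ∈ P.erase A ∧
    Q = (A.1, B.2) ::ₘ (B.1, A.2) ::ₘ ((P.erase A).erase B)

/-- `d i j P` is the number of intervals of `P` contained in `[i, j]`
(one-point zero loops included). -/
def dCount (i j : ℕ) (P : Multiset (ℕ × ℕ)) : ℕ :=
  Multiset.card (P.filter fun L => i ≤ L.1 ∧ L.2 ≤ j)

lemma dCount_add (i j : ℕ) (P R : Multiset (ℕ × ℕ)) :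
    dCount i j (P + R) = dCount i j P + dCount i j R := by
  simp only [dCount, Multiset.filter_add, Multiset.card_add]

/-- Replacing `[a₁, a₂]` and `[b₁, b₂]` by `[a₁, b₂]` and `[b₁, a₂]` never loses a
subinterval of `[i, j]`: if either old interval lies in `[i, j]`, so does the new inner one,
and if both do, so does the new outer one. -/
lemma dCount_pair_le_dCount_fusion (i j : ℕ) {a₁ a₂ b₁ b₂ : ℕ} (h₁ : a₁ ≤ b₁) (h₂ : a₂ ≤ b₂) :
    dCount i j {(a₁, a₂), (b₁, b₂)} ≤ dCount i j {(a₁, b₂), (b₁, a₂)} := by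
  simp only [dCount, Multiset.insert_eq_cons, Multiset.filter_cons, Multiset.filter_singleton]
  split_ifs <;> simp <;> omega

lemma dCount_pair_lt_dCount_fusion {a₁ a₂ b₁ b₂ : ℕ} (h₁ : a₁ < b₁) (h₂ : a₂ < b₂) :
    dCount b₁ a₂ {(a₁, a₂), (b₁, b₂)} < dCount b₁ a₂ {(a₁, b₂), (b₁, a₂)} := by
  simp only [dCount, Multiset.insert_eq_cons, Multiset.filter_cons, Multiset.filter_singleton]
  split_ifs <;> simp <;> omega

lemma IsFusion.exists_eq_add {P Q : Multiset (ℕ × ℕ)} (h : IsFusion P Q) :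
    ∃ A B : ℕ × ℕ, ∃ R : Multiset (ℕ × ℕ), A.1 < B.1 ∧ B.1 ≤ A.2 ∧ A.2 < B.2 ∧
      P = {A, B} + R ∧ Q = {(A.1, B.2), (B.1, A.2)} + R := by
  obtain ⟨A, B, h₁, h₂, h₃, hA, hB, rfl⟩ := h
  have pair_add (a b : ℕ × ℕ) (R : Multiset (ℕ × ℕ)) : {a, b} + R = a ::ₘ b ::ₘ R := by
    rw [Multiset.insert_eq_cons, Multiset.cons_add, Multiset.singleton_add]
  refine ⟨A, B, (P.erase A).erase B, h₁, h₂, h₃, ?_, pair_add _ _ _ |>.symm⟩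
  rw [pair_add, Multiset.cons_erase hB, Multiset.cons_erase hA]

theorem stmt_2_general (P Q : Multiset (ℕ × ℕ))
    (hPQ : IsFusion P Q) :
    (∀ i j : ℕ, i ≤ j → dCount i j P ≤ dCount i j Q) ∧
    (∃ i j : ℕ, i ≤ j ∧ dCount i j P < dCount i j Q) := by
  obtain ⟨A, B, R, h₁, h₂, h₃, rfl, rfl⟩ := hPQ.exists_eq_add
  refine ⟨fun i j _ => ?_, B.1, A.2, h₂, ?_⟩
  · rw [dCount_add, dCount_add]
    exact Nat.add_le_add_right (dCount_pair_le_dCount_fusion i j h₁.le h₃.le) _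
  · rw [dCount_add, dCount_add]
    exact Nat.add_lt_add_right (dCount_pair_lt_dCount_fusion h₁ h₃) _

/-- A single nontrivial fusion weakly increases every statistic `d_{ij}` and strictly
increases at least one of them. -/
theorem stmt_2 (n : ℕ) (P Q : Multiset (ℕ × ℕ))
    (hP : ∀ L ∈ P, 1 ≤ L.1 ∧ L.1 ≤ L.2 ∧ L.2 ≤ n)
    (hPQ : IsFusion P Q) :
    (∀ i j : ℕ, i ≤ j → dCount i j P ≤ dCount i j Q) ∧
    (∃ i j : ℕ, i ≤ j ∧ dCount i j P < dCount i j Q) :=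
  stmt_2_general P Q hPQ
end

section
/- The partial order on Kostant pictures defined by 'P ≥ Q if Q can be obtained from P by a finite sequence of fusions' is well-defined (antisymmetric): no nonempty sequence of nontrivial fusions applied to P can return P. -/
def sqLengthSum (P : Multiset (ℕ × ℕ)) : ℕ :=
  (P.map fun p => (p.2 - p.1) ^ 2).sum

lemma sq_sub_add_sq_sub_lt {a b c d : ℕ} (hab : a < b) (hbc : b ≤ c) (hcd : c < d) :
    (c - a) ^ 2 + (d - b) ^ 2 < (d - a) ^ 2 + (c - b) ^ 2 := by
  zify [hab.le, hbc, hcd.le, (hab.trans_le hbc).le, (hbc.trans_lt hcd).le,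
    (hab.trans_le (hbc.trans hcd.le)).le]
  have hpos : (0 : ℤ) < (b - a) * (d - c) := by
    apply mul_pos <;> omega
  nlinarith

lemma sqLengthSum_lt_of_isFusion {P Q : Multiset (ℕ × ℕ)} (h : IsFusion P Q) :
    sqLengthSum P < sqLengthSum Q := by
  obtain ⟨A, B, hAB, hBA, hAB', hA, hB, rfl⟩ := h
  have hP : P = A ::ₘ B ::ₘ (P.erase A).erase B := by
    rw [Multiset.cons_erase hB, Multiset.cons_erase hA]
  have key := sq_sub_add_sq_sub_lt hAB hBA hAB'
  rw [hP]
  simp only [sqLengthSum, Multiset.erase_cons_head, Multiset.map_cons, Multiset.sum_cons]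
  omega

lemma sqLengthSum_lt_of_transGen {P Q : Multiset (ℕ × ℕ)}
    (h : Relation.TransGen IsFusion P Q) : sqLengthSum P < sqLengthSum Q := by
  induction h with
  | single h => exact sqLengthSum_lt_of_isFusion h
  | tail _ h ih => exact ih.trans (sqLengthSum_lt_of_isFusion h)

/-- Antisymmetry of the fusion order on Kostant pictures: no nonempty sequence of
nontrivial fusions applied to `P` can return `P`. -/
theorem stmt_3 (P : Multiset (ℕ × ℕ)) : ¬ Relation.TransGen IsFusion P P :=
  fun h => (sqLengthSum_lt_of_transGen h).false
end

section
/- In the polynomial ring ℂ[x_{ij} : 1 ≤ i < j ≤ 6], the polynomial P = x_{34}x_{13}x_{46}x_{25} − x_{23}x_{34}x_{46}x_{15} − x_{34}x_{45}x_{13}x_{26} + x_{23}x_{34}x_{45}x_{16} − x_{13}x_{25}x_{36} − x_{46}x_{14}x_{25} + x_{24}x_{46}x_{15} + x_{13}x_{35}x_{26} + x_{23}x_{36}x_{15} + x_{45}x_{14}x_{26} − x_{23}x_{35}x_{16} − x_{45}x_{24}x_{16} − 2x_{15}x_{26} + 2x_{25}x_{16} is not equal to the determinant of any 4×4 matrix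 obtained from the matrix A with rows (x_{13}, x_{15}, x_{14}, x_{16}), (x_{23}, x_{25}, x_{24}, x_{26}), (1, x_{35}, x_{34}, x_{36}), (0, x_{45}, 1, x_{46}) by replacing some subset of its entries with 0. -/
open MvPolynomial

private lemma fin4_mk3 (h : 3 < 4) : (⟨3, h⟩ : Fin 4) = 3 := rfl
private lemma fin4_mk2 (h : 2 < 4) : (⟨2, h⟩ : Fin 4) = 2 := rfl

private theorem det_fin_four' {R : Type*} [CommRing R] (A : Matrix (Fin 4) (Fin 4) R) :
    Matrix.det A =
      A 0 0 * (A 1 1 * (A 2 2 * A 3 3 - A 2 3 * A 3 2) - A 1 2 * (A 2 1 * A 3 3 - A 2 3 * A 3 1) + A 1 3 * (A 2 1 * A 3 2 - A 2 2 * A 3 1))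
      - A 0 1 * (A 1 0 * (A 2 2 * A 3 3 - A 2 3 * A 3 2) - A 1 2 * (A 2 0 * A 3 3 - A 2 3 * A 3 0) + A 1 3 * (A 2 0 * A 3 2 - A 2 2 * A 3 0))
      + A 0 2 * (A 1 0 * (A 2 1 * A 3 3 - A 2 3 * A 3 1) - A 1 1 * (A 2 0 * A 3 3 - A 2 3 * A 3 0) + A 1 3 * (A 2 0 * A 3 1 - A 2 1 * A 3 0))
      - A 0 3 * (A 1 0 * (A 2 1 * A 3 2 - A 2 2 * A 3 1) - A 1 1 * (A 2 0 * A 3 2 - A 2 2 * A 3 0) + A 1 2 * (A 2 0 * A 3 1 - A 2 1 * A 3 0)) := by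
  simp only [Matrix.det_succ_row_zero, Fin.sum_univ_succ, Fin.sum_univ_zero,
    Matrix.submatrix_apply, Matrix.submatrix_submatrix, Matrix.det_unique, Fin.default_eq_zero,
    Function.comp_apply, Finset.univ_unique, Finset.sum_singleton, Fin.succ_zero_eq_one,
    Fin.succ_one_eq_two, Fin.val_zero, Fin.val_succ, Fin.zero_succAbove,
    Fin.succ_succAbove_zero, Fin.succ_succAbove_one, Fin.val_eq_zero]
  norm_num [Fin.succAbove, Fin.lt_def, Fin.castSucc, Fin.castAdd, Fin.castLE, Fin.succ]
  simp only [fin4_mk2, fin4_mk3]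
  ring

private def Wm : Matrix (Fin 4) (Fin 4) ℤ := !![2,3,5,7;11,13,17,19;1,23,29,31;0,37,1,41]

private def wC : ℕ × ℕ → ℂ
  | (1,3) => 2 | (1,5) => 3 | (1,4) => 5 | (1,6) => 7
  | (2,3) => 11 | (2,5) => 13 | (2,4) => 17 | (2,6) => 19
  | (3,5) => 23 | (3,4) => 29 | (3,6) => 31
  | (4,5) => 37 | (4,6) => 41
  | _ => 0

private lemma wC13 : wC (1,3) = 2 := rfl
private lemma wC15 : wC (1,5) = 3 := rfl
private lemma wC14 : wC (1,4) = 5 := rfl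
private lemma wC16 : wC (1,6) = 7 := rfl
private lemma wC23 : wC (2,3) = 11 := rfl
private lemma wC25 : wC (2,5) = 13 := rfl
private lemma wC24 : wC (2,4) = 17 := rfl
private lemma wC26 : wC (2,6) = 19 := rfl
private lemma wC35 : wC (3,5) = 23 := rfl
private lemma wC34 : wC (3,4) = 29 := rfl
private lemma wC36 : wC (3,6) = 31 := rfl
private lemma wC45 : wC (4,5) = 37 := rfl
private lemma wC46 : wC (4,6) = 41 := rfl

private def ee (b : Bool) (v : ℤ) : ℤ := if b then 0 else v

private def D (b00 b01 b02 b03 b10 b11 b12 b13 b20 b21 b22 b23 b30 b31 b32 b33 : Bool) : ℤ :=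
  let e00 := ee b00 2; let e01 := ee b01 3; let e02 := ee b02 5; let e03 := ee b03 7
  let e10 := ee b10 11; let e11 := ee b11 13; let e12 := ee b12 17; let e13 := ee b13 19
  let e20 := ee b20 1; let e21 := ee b21 23; let e22 := ee b22 29; let e23 := ee b23 31
  let e30 := ee b30 0; let e31 := ee b31 37; let e32 := ee b32 1; let e33 := ee b33 41
  e00 * (e11 * (e22 * e33 - e23 * e32) - e12 * (e21 * e33 - e23 * e31) + e13 * (e21 * e32 - e22 * e31))
  - e01 * (e10 * (e22 * e33 - e23 * e32) - e12 * (e20 * e33 - e23 * e30) + e13 * (e20 * e32 - e22 * e30))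
  + e02 * (e10 * (e21 * e33 - e23 * e31) - e11 * (e20 * e33 - e23 * e30) + e13 * (e20 * e31 - e21 * e30))
  - e03 * (e10 * (e21 * e32 - e22 * e31) - e11 * (e20 * e32 - e22 * e30) + e12 * (e20 * e31 - e21 * e30))

set_option maxHeartbeats 4000000 in
set_option maxRecDepth 20000 in
private theorem key : ∀ b00 b01 b02 b03 b10 b11 b12 b13 b20 b21 b22 b23 b30 b31 b32 b33 : Bool,
    D b00 b01 b02 b03 b10 b11 b12 b13 b20 b21 b22 b23 b30 b31 b32 b33 ≠ 31450 := by decide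

private lemma Dspec (z : Fin 4 → Fin 4 → Bool) :
    (Matrix.of fun i j => if z i j then (0:ℤ) else Wm i j).det =
      D (z 0 0) (z 0 1) (z 0 2) (z 0 3) (z 1 0) (z 1 1) (z 1 2) (z 1 3)
        (z 2 0) (z 2 1) (z 2 2) (z 2 3) (z 3 0) (z 3 1) (z 3 2) (z 3 3) := by
  rw [det_fin_four']
  simp only [Matrix.of_apply, D, ee, Wm]
  rfl

/-- The MV-polynomial of the counterexample Kostant picture `p₁` in type A₅ is not
the determinant of any matrix obtained from the given 4×4 matrix `A` by replacing
some subset of its entries by `0`.  `X (i,j)` stands for the indeterminate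
`x_{ij}`, `1 ≤ i < j ≤ 6`. -/
theorem stmt_9 :
    let A : Matrix (Fin 4) (Fin 4) (MvPolynomial (ℕ × ℕ) ℂ) :=
      !![X (1,3), X (1,5), X (1,4), X (1,6);
         X (2,3), X (2,5), X (2,4), X (2,6);
         1,       X (3,5), X (3,4), X (3,6);
         0,       X (4,5), 1,       X (4,6)]
    let P : MvPolynomial (ℕ × ℕ) ℂ :=
        X (3,4) * X (1,3) * X (4,6) * X (2,5)
      - X (2,3) * X (3,4) * X (4,6) * X (1,5)
      - X (3,4) * X (4,5) * X (1,3) * X (2,6)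
      + X (2,3) * X (3,4) * X (4,5) * X (1,6)
      - X (1,3) * X (2,5) * X (3,6)
      - X (4,6) * X (1,4) * X (2,5)
      + X (2,4) * X (4,6) * X (1,5)
      + X (1,3) * X (3,5) * X (2,6)
      + X (2,3) * X (3,6) * X (1,5)
      + X (4,5) * X (1,4) * X (2,6)
      - X (2,3) * X (3,5) * X (1,6)
      - X (4,5) * X (2,4) * X (1,6)
      - 2 * X (1,5) * X (2,6)
      + 2 * X (2,5) * X (1,6)
    ¬ ∃ z : Fin 4 → Fin 4 → Bool,
        P = (Matrix.of fun i j => if z i j then 0 else A i j).det := by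
  intro A P
  rintro ⟨z, hz⟩
  have h := congrArg (aeval wC) hz
  rw [AlgHom.map_det] at h
  have hM : (aeval wC).mapMatrix (Matrix.of fun i j => if z i j then 0 else A i j)
      = (Int.castRingHom ℂ).mapMatrix (Matrix.of fun i j => if z i j then (0:ℤ) else Wm i j) := by
    ext i j
    fin_cases i <;> fin_cases j <;>
      simp [A, Wm, apply_ite (aeval wC), apply_ite (eval wC), apply_ite (Int.cast : ℤ → ℂ),
        wC13, wC14, wC15, wC16, wC23, wC24, wC25, wC26, wC34, wC35, wC36, wC45, wC46]
  rw [hM, ← RingHom.map_det] at h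
  have hL : (aeval wC) P = (31450 : ℂ) := by
    simp only [P, map_add, map_sub, map_mul, map_ofNat, aeval_X,
      wC13, wC14, wC15, wC16, wC23, wC24, wC25, wC26, wC34, wC35, wC36, wC45, wC46]
    norm_num
  rw [hL] at h
  have h2 : (Matrix.of fun i j => if z i j then (0:ℤ) else Wm i j).det = 31450 := by
    have := h.symm
    rw [eq_intCast] at this
    exact_mod_cast this
  rw [Dspec] at h2
  exact key _ _ _ _ _ _ _ _ _ _ _ _ _ _ _ _ h2
end

section
/- Let F be a field and c₁, …, c_m nonzero elements of F, and let B = (b_{ij}) be an m×(number of mutable indices) integer matrix. Define the mutation in direction k by c'_k = (∏_{b_{ik}>0} c_i^{b_{ik}} + ∏_{b_{ik}<0} c_i^{−b_{ik}}) / c_k, assuming c'_k ≠ 0. Then applying the cluster mutation (c, B) ↦ (μ_k(c), μ_k(B)) twice in the same direction k returns the original pair (c, B). -/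
/-!
Mutating twice in direction `k` negates column `k` twice. Since `b (e k) k = 0`, the
exchange binomial of the mutated cluster does not see the new variable and is unchanged
by the sign flip of the column, so the second exchange relation reads
`c''_k = P / (P / c_k) = c_k`. For the matrix, the correction term of the second
mutation is the negative of the first; it is halved exactly because
`|x| y + x |y|` is always even.
-/

open Finset

section Cluster

variable {ι F : Type*} [Fintype ι] [Field F]

def exchangeBinomial (c : ι → F) (b : ι → ℤ) : F :=
  ∏ l, c l ^ (b l).toNat + ∏ l, c l ^ (-b l).toNat

lemma exchangeBinomial_neg (c : ι → F) (b : ι → ℤ) :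
    exchangeBinomial c (-b) = exchangeBinomial c b := by
  simp only [exchangeBinomial, Pi.neg_apply, neg_neg, add_comm]

variable [DecidableEq ι]

lemma exchangeBinomial_update_of_eq_zero (c : ι → F) {b : ι → ℤ} {i : ι} (hb : b i = 0)
    (x : F) : exchangeBinomial (Function.update c i x) b = exchangeBinomial c b := by
  have key : ∀ E : ι → ℕ, E i = 0 → ∏ l, Function.update c i x l ^ E l = ∏ l, c l ^ E l := by
    intro E hE
    refine prod_congr rfl fun l _ => ?_
    rcases eq_or_ne l i with rfl | hl
    · simp [hE]
    · rw [Function.update_of_ne hl]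
  simp only [exchangeBinomial]
  rw [key _ (by simp [hb]), key _ (by simp [hb])]

def mutateCluster (i : ι) (b : ι → ℤ) (c : ι → F) : ι → F :=
  Function.update c i (exchangeBinomial c b / c i)

lemma mutateCluster_neg_mutateCluster {i : ι} {b : ι → ℤ} {c : ι → F} (hb : b i = 0)
    (hnew : exchangeBinomial c b / c i ≠ 0) :
    mutateCluster i (-b) (mutateCluster i b c) = c := by
  have hP : exchangeBinomial c b ≠ 0 := (div_ne_zero_iff.mp hnew).1
  have hP' : exchangeBinomial (mutateCluster i b c) (-b) = exchangeBinomial c b := by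
    rw [exchangeBinomial_neg, mutateCluster, exchangeBinomial_update_of_eq_zero _ hb]
  funext l
  rcases eq_or_ne l i with rfl | hl
  · rw [mutateCluster, Function.update_self, hP', mutateCluster, Function.update_self,
      div_div_cancel₀ hP]
  · rw [mutateCluster, Function.update_of_ne hl, mutateCluster, Function.update_of_ne hl]

end Cluster

section Matrix

variable {ι κ : Type*} [DecidableEq ι] [DecidableEq κ]

/-- The mutable direction `k` corresponds to the row `i`. -/
def mutateMatrix (i : ι) (k : κ) (B : Matrix ι κ ℤ) : Matrix ι κ ℤ :=
  Matrix.of fun a j =>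
    if a = i ∨ j = k then -B a j
    else B a j + (|B a k| * B i j + B a k * |B i j|) / 2

lemma mutateMatrix_apply_self_right (i : ι) (k : κ) (B : Matrix ι κ ℤ) (a : ι) :
    mutateMatrix i k B a k = -B a k := by
  simp [mutateMatrix]

lemma two_dvd_abs_mul_add_mul_abs (x y : ℤ) : 2 ∣ |x| * y + x * |y| := by
  rcases abs_choice x with hx | hx <;> rcases abs_choice y with hy | hy <;>
    rw [hx, hy] <;> ring_nf <;> omega

lemma mutateMatrix_mutateMatrix (i : ι) (k : κ) (B : Matrix ι κ ℤ) :
    mutateMatrix i k (mutateMatrix i k B) = B := by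
  ext a j
  by_cases h : a = i ∨ j = k
  · simp [mutateMatrix, h]
  · have hneg : |-B a k| * -B i j + -B a k * |-B i j| = -(|B a k| * B i j + B a k * |B i j|) := by
      rw [abs_neg, abs_neg]; ring
    simp only [mutateMatrix, Matrix.of_apply, if_neg h, or_true, true_or, if_true, hneg,
      Int.neg_ediv_of_dvd (two_dvd_abs_mul_add_mul_abs _ _)]
    ring

end Matrix

theorem stmt_12_general {F : Type*} [Field F] {m q : ℕ}
    (e : Fin q → Fin m)
    (c : Fin m → F)
    (B : Matrix (Fin m) (Fin q) ℤ) (k : Fin q)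
    (hdiag : B (e k) k = 0)
    (hnew :
      (∏ l, c l ^ (B l k).toNat + ∏ l, c l ^ (-(B l k)).toNat) / c (e k) ≠ 0) :
    let μB : Matrix (Fin m) (Fin q) ℤ → Matrix (Fin m) (Fin q) ℤ := fun B' =>
      Matrix.of fun i j =>
        if i = e k ∨ j = k then -B' i j
        else B' i j + (|B' i k| * B' (e k) j + B' i k * |B' (e k) j|) / 2
    let μc : Matrix (Fin m) (Fin q) ℤ → (Fin m → F) → (Fin m → F) := fun B' c' =>
      fun i =>
        if i = e k then
          (∏ l, c' l ^ (B' l k).toNat + ∏ l, c' l ^ (-(B' l k)).toNat) / c' (e k)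
        else c' i
    μc (μB B) (μc B c) = c ∧ μB (μB B) = B := by
  intro μB μc
  have hμB : μB = mutateMatrix (e k) k := rfl
  have hμc : ∀ B' c', μc B' c' = mutateCluster (e k) (fun l => B' l k) c' := by
    intro B' c'
    funext i
    simp only [μc, mutateCluster, Function.update_apply, exchangeBinomial]
  have hcol : (fun l => mutateMatrix (e k) k B l k) = -fun l => B l k :=
    funext fun l => mutateMatrix_apply_self_right _ _ B l
  rw [hμc, hμc, hμB, hcol]
  exact ⟨mutateCluster_neg_mutateCluster hdiag hnew, mutateMatrix_mutateMatrix _ _ B⟩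

/-- Cluster mutation (of both the cluster and the exchange matrix) in a fixed
direction `k` is an involution.  Here `c : Fin m → F` is the cluster (all entries
nonzero), `B` is the integer exchange matrix with mutable directions indexed by
`Fin q` embedded in `Fin m` via `e`, `B (e k) k = 0` (no loops at `k`), and the
mutated variable `c'_k = (∏_{b_{ik}>0} c_i^{b_{ik}} + ∏_{b_{ik}<0} c_i^{-b_{ik}})/c_k`
is assumed nonzero.  Then mutating twice in direction `k` returns `(c, B)`. -/
theorem stmt_12 {F : Type*} [Field F] {m q : ℕ}
    (e : Fin q → Fin m) (he : Function.Injective e)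
    (c : Fin m → F) (hc : ∀ i, c i ≠ 0)
    (B : Matrix (Fin m) (Fin q) ℤ) (k : Fin q)
    (hdiag : B (e k) k = 0)
    (hnew :
      (∏ l, c l ^ (B l k).toNat + ∏ l, c l ^ (-(B l k)).toNat) / c (e k) ≠ 0) :
    let μB : Matrix (Fin m) (Fin q) ℤ → Matrix (Fin m) (Fin q) ℤ := fun B' =>
      Matrix.of fun i j =>
        if i = e k ∨ j = k then -B' i j
        else B' i j + (|B' i k| * B' (e k) j + B' i k * |B' (e k) j|) / 2
    let μc : Matrix (Fin m) (Fin q) ℤ → (Fin m → F) → (Fin m → F) := fun B' c' =>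
      fun i =>
        if i = e k then
          (∏ l, c' l ^ (B' l k).toNat + ∏ l, c' l ^ (-(B' l k)).toNat) / c' (e k)
        else c' i
    μc (μB B) (μc B c) = c ∧ μB (μB B) = B :=
  stmt_12_general e c B k hdiag hnew
end
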